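/- For any connected graph G with at least one edge, the connected domination number satisfies γ_c(G) ≤ 3·γ(G). -/
import Mathlib


/-- `D` is a dominating set of `G`. -/
def Dominating {V : Type*} (G : SimpleGraph V) (D : Set V) : Prop :=
  ∀ v, v ∈ D ∨ ∃ u ∈ D, G.Adj u v

/-- The domination number. -/
noncomputable def domNum {V : Type*} (G : SimpleGraph V) : ℕ :=
  sInf {n | ∃ D : Set V, D.Finite ∧ D.ncard = n ∧ Dominating G D}

/-- The connected domination number. -/
noncomputable def connDomNum {V : Type*} (G : SimpleGraph V) : ℕ :=
  sInf {n | ∃ D : Set V, D.Finite ∧ D.ncard = n ∧ Dominating G D ∧ (G.induce D).Connected}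

open SimpleGraph

section Aux

variable {V : Type*} {G : SimpleGraph V}

lemma Dominating.mono {S T : Set V} (h : Dominating G S) (hST : S ⊆ T) : Dominating G T := by
  intro v
  rcases h v with hv | ⟨u, hu, hadj⟩
  · exact Or.inl (hST hv)
  · exact Or.inr ⟨u, hST hu, hadj⟩

lemma reachable_induce_of_walk {T : Set V} : ∀ {a b : V} (w : G.Walk a b),
    (∀ x ∈ w.support, x ∈ T) → ∀ (ha : a ∈ T) (hb : b ∈ T),
    (G.induce T).Reachable ⟨a, ha⟩ ⟨b, hb⟩ := by
  intro a b w
  induction w with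
  | nil => intro _ ha hb; exact Reachable.refl _
  | @cons a c b h p ih =>
    intro hsupp ha hb
    have hc : c ∈ T := hsupp c (by simp)
    exact (SimpleGraph.Adj.reachable
      (show (G.induce T).Adj ⟨a, ha⟩ ⟨c, hc⟩ from h)).trans
      (ih (fun x hx => hsupp x (by simp [hx])) hc hb)

lemma dist_getVert_le (hconn : G.Connected) : ∀ {a b : V} (w : G.Walk a b) (n : ℕ),
    G.dist a (w.getVert n) ≤ n := by
  intro a b w
  induction w with
  | nil =>
    intro n
    rw [Walk.getVert_of_length_le _ (by simp)]
    simp [SimpleGraph.dist_self]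
  | @cons a c b h p ih =>
    intro n
    cases n with
    | zero => simp [SimpleGraph.dist_self]
    | succ n =>
      have h1 : G.dist a c ≤ 1 :=
        le_trans (SimpleGraph.dist_le (Walk.cons h Walk.nil)) (by simp)
      have h2 := ih n
      have h3 := hconn.dist_triangle (u := a) (v := c) (w := p.getVert n)
      simp only [Walk.getVert_cons_succ]
      omega

lemma dist_getVert_le' : ∀ {a b : V} (w : G.Walk a b) (n : ℕ),
    G.dist (w.getVert n) b ≤ w.length - n := by
  intro a b w
  induction w with
  | nil =>
    intro n
    rw [Walk.getVert_of_length_le _ (by simp)]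
    simp [SimpleGraph.dist_self]
  | @cons a c b h p ih =>
    intro n
    cases n with
    | zero =>
      simpa using SimpleGraph.dist_le (Walk.cons h p)
    | succ n =>
      have h2 := ih n
      simp only [Walk.getVert_cons_succ, Walk.length_cons]
      omega

lemma merge_step (hconn : G.Connected) {S : Set V}
    (hSf : S.Finite) (hSne : S.Nonempty) (hdom : Dominating G S)
    (hnc : ¬ (G.induce S).Connected) :
    ∃ T : Set V, S ⊆ T ∧ T.Finite ∧ T.ncard ≤ S.ncard + 2 ∧
      Nat.card ((G.induce T).ConnectedComponent) <
        Nat.card ((G.induce S).ConnectedComponent) := by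
  classical
  haveI hne : Nonempty ↥S := hSne.to_subtype
  rw [SimpleGraph.connected_iff] at hnc
  have hpre : ¬ (G.induce S).Preconnected := fun h => hnc ⟨h, hne⟩
  rw [SimpleGraph.Preconnected] at hpre
  push_neg at hpre
  obtain ⟨x0, y0, hxy0⟩ := hpre
  set P : Set ℕ := {d | ∃ x y : ↥S, ¬ (G.induce S).Reachable x y ∧ G.dist ↑x ↑y = d} with hP
  have hPne : P.Nonempty := ⟨_, x0, y0, hxy0, rfl⟩
  obtain ⟨u, v, huv, hd⟩ := Nat.sInf_mem hPne
  set d := sInf P with hdd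
  have hmin : ∀ x y : ↥S, ¬ (G.induce S).Reachable x y → d ≤ G.dist ↑x ↑y :=
    fun x y h => Nat.sInf_le ⟨x, y, h, rfl⟩
  have hne' : (u : V) ≠ (v : V) := by
    intro h
    exact huv (by rw [Subtype.ext h])
  have hdpos : 0 < d := hd ▸ hconn.pos_dist_of_ne hne'
  obtain ⟨w, hw⟩ := hconn.exists_walk_length_eq_dist ↑u ↑v
  rw [hd] at hw
  have hd3 : d ≤ 3 := by
    by_contra hgt
    push_neg at hgt
    set c2 := w.getVert 2 with hc2
    have hdu2 : G.dist ↑u c2 ≤ 2 := dist_getVert_le hconn w 2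
    have hdv : G.dist c2 ↑v ≤ d - 2 := by
      have h := dist_getVert_le' w 2
      rw [← hc2] at h
      omega
    obtain ⟨s, hsS, hds⟩ : ∃ s ∈ S, G.dist c2 s ≤ 1 := by
      rcases hdom c2 with hc2' | ⟨s, hsS, hadj⟩
      · exact ⟨c2, hc2', by simp [SimpleGraph.dist_self]⟩
      · exact ⟨s, hsS, le_trans (SimpleGraph.dist_le (Walk.cons hadj.symm Walk.nil)) (by simp)⟩
    have hus : G.dist ↑u s ≤ 3 := by
      have := hconn.dist_triangle (u := (u : V)) (v := c2) (w := s)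
      omega
    have hsv : G.dist s ↑v ≤ d - 1 := by
      have ht := hconn.dist_triangle (u := s) (v := c2) (w := (v : V))
      have : G.dist s c2 = G.dist c2 s := SimpleGraph.dist_comm
      omega
    have r1 : (G.induce S).Reachable u ⟨s, hsS⟩ := by
      by_contra hr
      have h' : d ≤ G.dist ↑u s := hmin u ⟨s, hsS⟩ hr
      omega
    have r2 : (G.induce S).Reachable ⟨s, hsS⟩ v := by
      by_contra hr
      have h' : d ≤ G.dist s ↑v := hmin ⟨s, hsS⟩ v hr
      omega
    exact huv (r1.trans r2)
  set g1 := w.getVert 1 with hg1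
  set g2 := w.getVert 2 with hg2
  set T : Set V := S ∪ {g1, g2} with hT
  have hST : S ⊆ T := Set.subset_union_left
  have hTf : T.Finite := hSf.union (Set.toFinite _)
  haveI : Finite ↥T := hTf.to_subtype
  haveI : Finite ↥S := hSf.to_subtype
  have hcard : T.ncard ≤ S.ncard + 2 := by
    have : T = insert g1 (insert g2 S) := by
      rw [hT, Set.union_comm]
      simp [Set.insert_union, Set.singleton_union]
    rw [this]
    calc (insert g1 (insert g2 S)).ncard ≤ (insert g2 S).ncard + 1 := Set.ncard_insert_le _ _
      _ ≤ S.ncard + 1 + 1 := by have := Set.ncard_insert_le g2 S; omega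
      _ = S.ncard + 2 := by omega
  have hsupp : ∀ x ∈ w.support, x ∈ T := by
    intro x hx
    rw [Walk.mem_support_iff_exists_getVert] at hx
    obtain ⟨n, hgx, hn⟩ := hx
    have hn3 : n ≤ 3 := by omega
    interval_cases n
    · rw [Walk.getVert_zero] at hgx
      exact hST (hgx ▸ u.2)
    · exact Or.inr (Or.inl hgx.symm)
    · exact Or.inr (Or.inr hgx.symm)
    · have hl : w.length = 3 := by omega
      have : w.getVert 3 = ↑v := by rw [← hl]; exact w.getVert_length
      rw [this] at hgx
      exact hST (hgx ▸ v.2)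
  have rT : (G.induce T).Reachable ⟨↑u, hST u.2⟩ ⟨↑v, hST v.2⟩ :=
    reachable_induce_of_walk w hsupp _ _
  refine ⟨T, hST, hTf, hcard, ?_⟩
  set f : (G.induce S).ConnectedComponent → (G.induce T).ConnectedComponent :=
    ConnectedComponent.map (G.induceHomOfLE hST).toHom with hf
  have hfmk : ∀ (z : V) (hz : z ∈ S),
      f ((G.induce S).connectedComponentMk ⟨z, hz⟩) =
        (G.induce T).connectedComponentMk ⟨z, hST hz⟩ := by
    intro z hz
    rfl
  have hfsurj : Function.Surjective f := by
    intro c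
    refine ConnectedComponent.ind (fun x => ?_) c
    rcases hdom x.1 with hxS | ⟨s, hsS, hadj⟩
    · refine ⟨(G.induce S).connectedComponentMk ⟨x.1, hxS⟩, ?_⟩
      exact hfmk x.1 hxS
    · refine ⟨(G.induce S).connectedComponentMk ⟨s, hsS⟩, ?_⟩
      rw [hfmk]
      have hadj' : (G.induce T).Adj ⟨s, hST hsS⟩ x := hadj
      exact ConnectedComponent.sound hadj'.reachable
  have h1 : f ((G.induce S).connectedComponentMk u) = f ((G.induce S).connectedComponentMk v) := by
    have hu' := hfmk ↑u u.2
    have hv' := hfmk ↑v v.2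
    rw [show ((⟨↑u, u.2⟩ : ↥S) = u) from rfl] at hu'
    rw [show ((⟨↑v, v.2⟩ : ↥S) = v) from rfl] at hv'
    rw [hu', hv']
    exact ConnectedComponent.sound rT
  have h2 : (G.induce S).connectedComponentMk u ≠ (G.induce S).connectedComponentMk v :=
    fun h => huv (ConnectedComponent.exact h)
  have hle := Nat.card_le_card_of_surjective f hfsurj
  rcases lt_or_eq_of_le hle with h | h
  · exact h
  · exfalso
    have hbij : Function.Bijective f :=
      (Nat.bijective_iff_surjective_and_card f).mpr ⟨hfsurj, h.symm⟩
    exact h2 (hbij.injective h1)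

lemma build (hconn : G.Connected) :
    ∀ k (S : Set V), S.Finite → S.Nonempty → Dominating G S →
      Nat.card ((G.induce S).ConnectedComponent) ≤ k →
      ∃ T : Set V, T.Finite ∧ Dominating G T ∧ (G.induce T).Connected ∧
        T.ncard ≤ S.ncard + 2 * k := by
  intro k
  induction k with
  | zero =>
    intro S hSf hSne hdom hcard
    haveI : Finite ↥S := hSf.to_subtype
    haveI : Nonempty ↥S := hSne.to_subtype
    haveI : Nonempty ((G.induce S).ConnectedComponent) :=
      ⟨(G.induce S).connectedComponentMk (Classical.choice ‹Nonempty ↥S›)⟩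
    have : 0 < Nat.card ((G.induce S).ConnectedComponent) := Nat.card_pos
    omega
  | succ k ih =>
    intro S hSf hSne hdom hcard
    by_cases hc : (G.induce S).Connected
    · exact ⟨S, hSf, hdom, hc, by omega⟩
    · obtain ⟨T, hST, hTf, hTcard, hTlt⟩ := merge_step hconn hSf hSne hdom hc
      obtain ⟨U, hUf, hUdom, hUconn, hUcard⟩ :=
        ih T hTf (hSne.mono hST) (hdom.mono hST) (by omega)
      exact ⟨U, hUf, hUdom, hUconn, by omega⟩

end Aux

/-- For any finite connected graph with at least one edge, `γ_c(G) ≤ 3 · γ(G)`. -/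
theorem stmt2 {V : Type*} [Fintype V] (G : SimpleGraph V) (hconn : G.Connected)
    (hedge : ∃ u v : V, G.Adj u v) :
    connDomNum G ≤ 3 * domNum G := by
  classical
  obtain ⟨u0, v0, huv0⟩ := hedge
  have hmem : domNum G ∈ {n | ∃ D : Set V, D.Finite ∧ D.ncard = n ∧ Dominating G D} := by
    apply Nat.sInf_mem
    exact ⟨(Set.univ : Set V).ncard, Set.univ, Set.finite_univ, rfl, fun v => Or.inl trivial⟩
  obtain ⟨D, hDf, hDcard, hDdom⟩ := hmem
  have hDne : D.Nonempty := by
    rcases Set.eq_empty_or_nonempty D with h | h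
    · exfalso
      rcases hDdom u0 with h0 | ⟨u, hu, _⟩
      · rw [h] at h0; exact h0
      · rw [h] at hu; exact hu
    · exact h
  haveI : Finite ↥D := hDf.to_subtype
  have hcomp : Nat.card ((G.induce D).ConnectedComponent) ≤ D.ncard := by
    have h1 := Nat.card_le_card_of_surjective ((G.induce D).connectedComponentMk)
      (fun c => Quot.exists_rep c)
    rwa [Nat.card_coe_set_eq] at h1
  obtain ⟨T, hTf, hTdom, hTconn, hTcard⟩ := build hconn D.ncard D hDf hDne hDdom hcomp
  have hle : connDomNum G ≤ T.ncard := Nat.sInf_le ⟨T, hTf, rfl, hTdom, hTconn⟩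
  omega
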